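/- For any policy π and transition kernels P_s, P_t on a finite MDP with rewards bounded by R_max, if ν^π_{P_s} and ν^π_{P_t} both have full support on S×A×S, then J^π_{P_t} ≥ J^π_{P_s} − (4 R_max/(1−γ)) · √(D_JS(ν^π_{P_s} ‖ ν^π_{P_t})), where D_JS is the Jensen–Shannon divergence. -/

import Mathlib

open scoped BigOperators

section MDP

variable {S A : Type*} [Fintype S] [Fintype A] [DecidableEq S]

/-- One-step state distribution update under kernel `P` and policy `π`. -/
noncomputable def stepDist (P : S → A → S → ℝ) (π : S → A → ℝ) (ρ : S → ℝ) : S → ℝ :=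
  fun s => ∑ s' : S, ∑ a : A, ρ s' * π s' a * P s' a s

/-- Distribution of the state at time `t`. -/
noncomputable def stateDist (P : S → A → S → ℝ) (π : S → A → ℝ) (ρ₀ : S → ℝ) : ℕ → S → ℝ
  | 0 => ρ₀
  | t + 1 => stepDist P π (stateDist P π ρ₀ t)

/-- Discounted state visitation distribution `d^π_P`. -/
noncomputable def visitS (γ : ℝ) (P : S → A → S → ℝ) (π : S → A → ℝ) (ρ₀ : S → ℝ) : S → ℝ :=
  fun s => (1 - γ) * ∑' t : ℕ, γ ^ t * stateDist P π ρ₀ t s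

/-- Discounted state-action visitation distribution `μ^π_P`. -/
noncomputable def visitSA (γ : ℝ) (P : S → A → S → ℝ) (π : S → A → ℝ) (ρ₀ : S → ℝ) :
    S × A → ℝ :=
  fun x => (1 - γ) * ∑' t : ℕ, γ ^ t * stateDist P π ρ₀ t x.1 * π x.1 x.2

/-- Discounted transition (state-action-next-state) visitation distribution `ν^π_P`. -/
noncomputable def visitT (γ : ℝ) (P : S → A → S → ℝ) (π : S → A → ℝ) (ρ₀ : S → ℝ) :
    S × A × S → ℝ :=
  fun x => (1 - γ) * ∑' t : ℕ, γ ^ t * stateDist P π ρ₀ t x.1 * π x.1 x.2.1 * P x.1 x.2.1 x.2.2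

/-- Expected discounted return starting from initial distribution `ρ₀`. -/
noncomputable def ret (γ : ℝ) (r : S → A → S → ℝ) (P : S → A → S → ℝ) (π : S → A → ℝ)
    (ρ₀ : S → ℝ) : ℝ :=
  ∑' t : ℕ, γ ^ t *
    ∑ s : S, ∑ a : A, ∑ s' : S, stateDist P π ρ₀ t s * π s a * P s a s' * r s a s'

/-- Value function `V^π_P`. -/
noncomputable def valueFn (γ : ℝ) (r : S → A → S → ℝ) (P : S → A → S → ℝ) (π : S → A → ℝ) :
    S → ℝ :=
  fun s => ret γ r P π (fun s'' => if s'' = s then 1 else 0)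

/-- Expected discounted return `J^π_P = E_{ρ₀}[V^π_P]`. -/
noncomputable def expRet (γ : ℝ) (r : S → A → S → ℝ) (P : S → A → S → ℝ) (π : S → A → ℝ)
    (ρ₀ : S → ℝ) : ℝ :=
  ∑ s : S, ρ₀ s * valueFn γ r P π s

/-- Total variation distance `(1/2) ∑ |p - q|`. -/
noncomputable def tvDist {X : Type*} [Fintype X] (p q : X → ℝ) : ℝ :=
  (1 / 2) * ∑ x : X, |p x - q x|

/-- Kullback–Leibler divergence on a finite set. -/
noncomputable def klDiv' {X : Type*} [Fintype X] (p q : X → ℝ) : ℝ :=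
  ∑ x : X, p x * Real.log (p x / q x)

/-- Jensen–Shannon divergence on a finite set. -/
noncomputable def jsDiv {X : Type*} [Fintype X] (p q : X → ℝ) : ℝ :=
  (1 / 2) * klDiv' p (fun x => (p x + q x) / 2) +
    (1 / 2) * klDiv' q (fun x => (p x + q x) / 2)

/-- `π` is a stochastic policy. -/
def IsStochPol (π : S → A → ℝ) : Prop :=
  ∀ s, (∀ a, 0 ≤ π s a) ∧ ∑ a : A, π s a = 1

/-- `P` is a stochastic transition kernel. -/
def IsStochKer (P : S → A → S → ℝ) : Prop :=
  ∀ s a, (∀ s', 0 ≤ P s a s') ∧ ∑ s' : S, P s a s' = 1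

/-- `p` is a probability mass function. -/
def IsProb {X : Type*} [Fintype X] (p : X → ℝ) : Prop :=
  (∀ x, 0 ≤ p x) ∧ ∑ x : X, p x = 1

end MDP

/-!
The discounted return is linear in the transition visitation distribution:
`(1 - γ) J^π_P = ∑ₓ ν^π_P(x) r(x)`. Hence `(1 - γ) (J^π_{P_s} - J^π_{P_t})` is at most
`2 R_max D_TV(ν^π_{P_s}, ν^π_{P_t})`, and it remains to bound total variation by
Jensen–Shannon divergence. With `m = (p + q) / 2` and `p = m (1 + x)`, `q = m (1 - x)`, the power
series of the logarithm give `(1 + x) log (1 + x) + (1 - x) log (1 - x) ≥ x²`, so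
`2 D_JS(p ‖ q) ≥ ∑ (p - q)² / (2 (p + q))`, and Cauchy–Schwarz with `∑ (p + q) = 2` yields
`D_TV(p, q)² ≤ 2 D_JS(p ‖ q)`.
-/

section Divergence

open Real

theorem sq_le_one_add_mul_log_add_one_sub_mul_log {x : ℝ} (hx : |x| < 1) :
    x ^ 2 ≤ (1 + x) * log (1 + x) + (1 - x) * log (1 - x) := by
  have hx2 : |x ^ 2| < 1 := by rw [abs_pow, sq_lt_one_iff₀ (abs_nonneg x)]; exact hx
  have hlog : log (1 - x ^ 2) = log (1 + x) + log (1 - x) := by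
    rw [← log_mul (by linarith [neg_abs_le x]) (by linarith [le_abs_self x])]; ring_nf
  have hsum := ((hasSum_log_sub_log_of_abs_lt_one hx).mul_left x).sub
    (hasSum_pow_div_log_of_abs_lt_one hx2)
  -- the `n`-th term is `x ^ (2n + 2) (2 / (2n + 1) - 1 / (n + 1)) ≥ 0`, and the `0`-th is `x ^ 2`
  have hfirst := le_hasSum hsum 0 fun n _ => by
    have hcoeff : (0 : ℝ) ≤ 2 / (2 * n + 1) - 1 / (n + 1) := by
      rw [div_sub_div _ _ (by positivity) (by positivity)]
      exact div_nonneg (by linarith) (by positivity)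
    convert mul_nonneg (pow_nonneg (sq_nonneg x) (n + 1)) hcoeff using 1
    ring
  calc x ^ 2 = x * (2 * (1 / (2 * (0 : ℕ) + 1)) * x ^ (2 * 0 + 1)) -
        (x ^ 2) ^ (0 + 1) / ((0 : ℕ) + 1) := by norm_num; ring
    _ ≤ x * (log (1 + x) - log (1 - x)) - -log (1 - x ^ 2) := hfirst
    _ = (1 + x) * log (1 + x) + (1 - x) * log (1 - x) := by rw [hlog]; ring

theorem sq_sub_div_le_mul_log_add_mul_log {p q : ℝ} (hp : 0 < p) (hq : 0 < q) :
    (p - q) ^ 2 / (2 * (p + q)) ≤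
      p * log (p / ((p + q) / 2)) + q * log (q / ((p + q) / 2)) := by
  have hpq : 0 < p + q := add_pos hp hq
  set x := (p - q) / (p + q) with hx
  have hx1 : |x| < 1 := by
    rw [abs_div, abs_of_pos hpq, div_lt_one hpq, abs_sub_lt_iff]; constructor <;> linarith
  have e1 : p / ((p + q) / 2) = 1 + x := by rw [hx]; field_simp; ring
  have e2 : q / ((p + q) / 2) = 1 - x := by rw [hx]; field_simp; ring
  calc (p - q) ^ 2 / (2 * (p + q)) = (p + q) / 2 * x ^ 2 := by rw [hx]; field_simp
    _ ≤ (p + q) / 2 * ((1 + x) * log (1 + x) + (1 - x) * log (1 - x)) :=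
      mul_le_mul_of_nonneg_left (sq_le_one_add_mul_log_add_one_sub_mul_log hx1) (by positivity)
    _ = p * log (p / ((p + q) / 2)) + q * log (q / ((p + q) / 2)) := by
      rw [e1, e2, hx]; field_simp; ring

theorem two_mul_jsDiv_eq {X : Type*} [Fintype X] (p q : X → ℝ) :
    2 * jsDiv p q = ∑ x, (p x * log (p x / ((p x + q x) / 2)) +
      q x * log (q x / ((p x + q x) / 2))) := by
  simp only [jsDiv, klDiv', Finset.sum_add_distrib]
  ring

theorem sq_tvDist_le_two_mul_jsDiv {X : Type*} [Fintype X] {p q : X → ℝ}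
    (hp : ∀ x, 0 < p x) (hq : ∀ x, 0 < q x) (hp1 : ∑ x, p x = 1) (hq1 : ∑ x, q x = 1) :
    tvDist p q ^ 2 ≤ 2 * jsDiv p q := by
  have hpq : ∀ x ∈ Finset.univ, 0 < p x + q x := fun x _ => add_pos (hp x) (hq x)
  have hmass : ∑ x, (p x + q x) = 2 := by rw [Finset.sum_add_distrib, hp1, hq1]; norm_num
  have hcs := Finset.sq_sum_div_le_sum_sq_div Finset.univ (fun x => |p x - q x|) hpq
  simp only [hmass, sq_abs] at hcs
  have hchi : ∑ x, (p x - q x) ^ 2 / (p x + q x) ≤ 4 * jsDiv p q := by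
    rw [show 4 * jsDiv p q = 2 * (2 * jsDiv p q) by ring, two_mul_jsDiv_eq, Finset.mul_sum]
    refine Finset.sum_le_sum fun x _ => ?_
    have h := sq_sub_div_le_mul_log_add_mul_log (hp x) (hq x)
    have h2 : (p x - q x) ^ 2 / (p x + q x) = 2 * ((p x - q x) ^ 2 / (2 * (p x + q x))) := by
      field_simp
    linarith
  rw [tvDist]
  nlinarith

theorem tvDist_le_two_mul_sqrt_jsDiv {X : Type*} [Fintype X] {p q : X → ℝ}
    (hp : ∀ x, 0 < p x) (hq : ∀ x, 0 < q x) (hp1 : ∑ x, p x = 1) (hq1 : ∑ x, q x = 1) :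
    tvDist p q ≤ 2 * √(jsDiv p q) := by
  have h := sq_tvDist_le_two_mul_jsDiv hp hq hp1 hq1
  have hjs : 0 ≤ jsDiv p q := by nlinarith
  rw [show 2 * √(jsDiv p q) = √(4 * jsDiv p q) by
    rw [Real.sqrt_mul (by norm_num), show (4 : ℝ) = 2 ^ 2 by norm_num, Real.sqrt_sq two_pos.le]]
  exact Real.le_sqrt_of_sq_le (by linarith)

end Divergence

section Visitation

variable {S A : Type*} [Fintype S] [Fintype A] {P : S → A → S → ℝ} {π : S → A → ℝ}

theorem IsProb.le_one {X : Type*} [Fintype X] {p : X → ℝ} (hp : IsProb p) (x : X) : p x ≤ 1 :=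
  hp.2 ▸ Finset.single_le_sum (fun y _ => hp.1 y) (Finset.mem_univ x)

theorem IsProb.transition (hπ : IsStochPol π) (hP : IsStochKer P) {ρ : S → ℝ} (hρ : IsProb ρ) :
    IsProb fun x : S × A × S => ρ x.1 * π x.1 x.2.1 * P x.1 x.2.1 x.2.2 := by
  refine ⟨fun x => mul_nonneg (mul_nonneg (hρ.1 _) ((hπ _).1 _)) ((hP _ _).1 _), ?_⟩
  simp only [Fintype.sum_prod_type, ← Finset.mul_sum, (hP _ _).2, mul_one, (hπ _).2, hρ.2]

theorem IsProb.stepDist (hπ : IsStochPol π) (hP : IsStochKer P) {ρ : S → ℝ} (hρ : IsProb ρ) :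
    IsProb (_root_.stepDist P π ρ) := by
  have h := hρ.transition hπ hP
  refine ⟨fun s => Finset.sum_nonneg fun s' _ => Finset.sum_nonneg fun a _ => h.1 (s', a, s), ?_⟩
  rw [← h.2]
  simp only [_root_.stepDist, Fintype.sum_prod_type]
  rw [Finset.sum_comm]
  exact Finset.sum_congr rfl fun s _ => Finset.sum_comm

theorem isProb_stateDist (hπ : IsStochPol π) (hP : IsStochKer P) {ρ₀ : S → ℝ} (hρ : IsProb ρ₀)
    (t : ℕ) : IsProb (stateDist P π ρ₀ t) := by
  induction t with
  | zero => exact hρ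
  | succ t ih => exact ih.stepDist hπ hP

theorem stepDist_sum_smul {ι : Type*} (s : Finset ι) (c : ι → ℝ) (ρ : ι → S → ℝ) :
    stepDist P π (∑ i ∈ s, c i • ρ i) = ∑ i ∈ s, c i • stepDist P π (ρ i) := by
  ext s'
  simp only [stepDist, Finset.sum_apply, Pi.smul_apply, smul_eq_mul, Finset.sum_mul,
    Finset.mul_sum, mul_assoc]
  exact (Finset.sum_congr rfl fun _ _ => Finset.sum_comm).trans Finset.sum_comm

theorem stateDist_eq_sum_smul [DecidableEq S] (ρ₀ : S → ℝ) (t : ℕ) :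
    stateDist P π ρ₀ t = ∑ u, ρ₀ u • stateDist P π (fun v => if v = u then (1 : ℝ) else 0) t := by
  induction t with
  | zero => ext s; simp [stateDist, Finset.sum_apply]
  | succ t ih => rw [stateDist, ih, stepDist_sum_smul]; rfl

variable {γ : ℝ} (hγ0 : 0 ≤ γ) (hγ1 : γ < 1)
include hγ0 hγ1

theorem summable_geometric_mul_stateDist (hπ : IsStochPol π) (hP : IsStochKer P) {ρ₀ : S → ℝ}
    (hρ : IsProb ρ₀) (s : S) : Summable fun t => γ ^ t * stateDist P π ρ₀ t s :=
  (summable_geometric_of_lt_one hγ0 hγ1).of_nonneg_of_le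
    (fun t => mul_nonneg (pow_nonneg hγ0 t) ((isProb_stateDist hπ hP hρ t).1 s))
    (fun t => mul_le_of_le_one_right (pow_nonneg hγ0 t) ((isProb_stateDist hπ hP hρ t).le_one s))

variable (hπ : IsStochPol π) (hP : IsStochKer P) {ρ₀ : S → ℝ} (hρ : IsProb ρ₀)
include hπ hP hρ

theorem ret_eq_sum_tsum (r : S → A → S → ℝ) :
    ret γ r P π ρ₀ = ∑ x : S × A × S, ∑' t : ℕ,
      γ ^ t * stateDist P π ρ₀ t x.1 * π x.1 x.2.1 * P x.1 x.2.1 x.2.2 * r x.1 x.2.1 x.2.2 := by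
  rw [← Summable.tsum_finsetSum fun x _ =>
    (((summable_geometric_mul_stateDist hγ0 hγ1 hπ hP hρ x.1).mul_right _).mul_right _).mul_right _]
  simp only [ret, Fintype.sum_prod_type, Finset.mul_sum, mul_assoc]

theorem sum_visitT_mul (r : S → A → S → ℝ) :
    ∑ x, visitT γ P π ρ₀ x * r x.1 x.2.1 x.2.2 = (1 - γ) * ret γ r P π ρ₀ := by
  rw [ret_eq_sum_tsum hγ0 hγ1 hπ hP hρ, Finset.mul_sum]
  refine Finset.sum_congr rfl fun x _ => ?_
  rw [visitT, mul_assoc, ← tsum_mul_right]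

theorem sum_visitT : ∑ x, visitT γ P π ρ₀ x = 1 := by
  have hmass (t : ℕ) := ((isProb_stateDist hπ hP hρ t).transition hπ hP).2
  simp only [Fintype.sum_prod_type] at hmass
  have h := sum_visitT_mul hγ0 hγ1 hπ hP hρ fun _ _ _ => 1
  simp only [mul_one, ret, hmass, tsum_geometric_of_lt_one hγ0 hγ1] at h
  rw [h, mul_inv_cancel₀ (sub_ne_zero.2 hγ1.ne')]

theorem expRet_eq_ret [DecidableEq S] (r : S → A → S → ℝ) :
    expRet γ r P π ρ₀ = ret γ r P π ρ₀ := by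
  have hδ (u : S) : IsProb fun v => if v = u then (1 : ℝ) else 0 :=
    ⟨fun v => by positivity, by simp⟩
  simp only [expRet, valueFn, ret_eq_sum_tsum hγ0 hγ1 hπ hP (hδ _),
    ret_eq_sum_tsum hγ0 hγ1 hπ hP hρ, Finset.mul_sum]
  rw [Finset.sum_comm]
  refine Finset.sum_congr rfl fun x _ => ?_
  simp only [← tsum_mul_left]
  rw [← Summable.tsum_finsetSum fun u _ => ((((summable_geometric_mul_stateDist hγ0 hγ1 hπ hP
    (hδ u) x.1).mul_right _).mul_right _).mul_right _).mul_left _]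
  refine tsum_congr fun t => ?_
  rw [stateDist_eq_sum_smul ρ₀ t, Finset.sum_apply]
  simp only [Pi.smul_apply, smul_eq_mul, Finset.mul_sum, Finset.sum_mul]
  exact Finset.sum_congr rfl fun u _ => by ring

end Visitation

theorem sum_sub_mul_le_two_mul_tvDist {X : Type*} [Fintype X] (p q : X → ℝ) {f : X → ℝ} {M : ℝ}
    (hf : ∀ x, |f x| ≤ M) : ∑ x, (p x - q x) * f x ≤ 2 * M * tvDist p q := by
  calc ∑ x, (p x - q x) * f x ≤ ∑ x, |p x - q x| * M :=
        Finset.sum_le_sum fun x _ => (le_abs_self _).trans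
          ((abs_mul _ _).trans_le (mul_le_mul_of_nonneg_left (hf x) (abs_nonneg _)))
    _ = 2 * M * tvDist p q := by rw [tvDist, ← Finset.sum_mul]; ring

theorem stmt4 {S A : Type*} [Fintype S] [Fintype A] [DecidableEq S]
    (γ : ℝ) (hγ0 : 0 ≤ γ) (hγ1 : γ < 1)
    (r Ps Pt : S → A → S → ℝ) (π : S → A → ℝ) (ρ₀ : S → ℝ)
    (hπ : IsStochPol π) (hPs : IsStochKer Ps) (hPt : IsStochKer Pt) (hρ : IsProb ρ₀)
    (Rmax : ℝ) (hr : ∀ s a s', |r s a s'| ≤ Rmax)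
    (hsupp : ∀ x : S × A × S, 0 < visitT γ Ps π ρ₀ x ∧ 0 < visitT γ Pt π ρ₀ x) :
    expRet γ r Pt π ρ₀ ≥
      expRet γ r Ps π ρ₀ -
        (4 * Rmax / (1 - γ)) *
          Real.sqrt (jsDiv (visitT γ Ps π ρ₀) (visitT γ Pt π ρ₀)) := by
  have hJ (P : S → A → S → ℝ) (hP : IsStochKer P) :
      (1 - γ) * expRet γ r P π ρ₀ = ∑ x, visitT γ P π ρ₀ x * r x.1 x.2.1 x.2.2 := by
    rw [expRet_eq_ret hγ0 hγ1 hπ hP hρ, sum_visitT_mul hγ0 hγ1 hπ hP hρ]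
  have hgap : (1 - γ) * (expRet γ r Ps π ρ₀ - expRet γ r Pt π ρ₀) ≤
      2 * Rmax * tvDist (visitT γ Ps π ρ₀) (visitT γ Pt π ρ₀) := by
    rw [mul_sub, hJ Ps hPs, hJ Pt hPt, ← Finset.sum_sub_distrib]
    simp only [← sub_mul]
    exact sum_sub_mul_le_two_mul_tvDist _ _ fun x => hr x.1 x.2.1 x.2.2
  have hmass_s := sum_visitT hγ0 hγ1 hπ hPs hρ
  have htv := tvDist_le_two_mul_sqrt_jsDiv (fun x => (hsupp x).1) (fun x => (hsupp x).2) hmass_s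
    (sum_visitT hγ0 hγ1 hπ hPt hρ)
  obtain ⟨x, -⟩ := Finset.exists_ne_zero_of_sum_ne_zero (hmass_s ▸ one_ne_zero)
  have hR : 0 ≤ Rmax := (abs_nonneg _).trans (hr x.1 x.2.1 x.2.2)
  rw [ge_iff_le, sub_le_comm, div_mul_eq_mul_div, le_div_iff₀ (sub_pos.2 hγ1)]
  linarith [mul_le_mul_of_nonneg_left htv (by positivity : 0 ≤ 2 * Rmax)]
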